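/- Let n ≥ 1 and let the extended affine Weyl group W̃ = ℤ^n ⋊ S_n of GL_n act on ℤ^n by (λ, σ)·v = λ + σ·v, where σ ∈ S_n permutes the coordinates of v. For every nonempty periodic subset I ⊆ ℤ, the componentwise action x·(v_i)_{i∈I} = (x·v_i)_{i∈I} carries faces of type I to faces of type I, and the resulting action of W̃ on the set of faces of type I is transitive. -/

import Mathlib

/-- A subset `I ⊆ ℤ` is periodic if `i ∈ I ↔ i + n ∈ I`. -/
def IsPeriodic (n : ℕ) (I : Set ℤ) : Prop := ∀ i : ℤ, i ∈ I ↔ i + n ∈ I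

/-- A family `(v_i)_{i ∈ I}` (given as a total function, with conditions only on `I`) is a
face of type `I`: `v_{i+n} = v_i + (1,…,1)`, `v_i ≤ v_j` componentwise for `i ≤ j` in `I`,
and `Σ(v_j) - Σ(v_i) = j - i` for `i, j ∈ I`. -/
def IsFace (n : ℕ) (I : Set ℤ) (v : ℤ → Fin n → ℤ) : Prop :=
  (∀ i ∈ I, ∀ t, v (i + n) t = v i t + 1) ∧
  (∀ i ∈ I, ∀ j ∈ I, i ≤ j → ∀ t, v i t ≤ v j t) ∧
  (∀ i ∈ I, ∀ j ∈ I, (∑ t, v j t) - (∑ t, v i t) = j - i)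

/-- The extended affine Weyl group `W̃ = ℤ^n ⋊ S_n` of `GL_n` acting on `ℤ^n` by affine
transformations `(λ, σ) · u = λ + σ · u`, where `(σ · u) t = u (σ⁻¹ t)` permutes the
coordinates of `u`. -/
def affAct (n : ℕ) (x : (Fin n → ℤ) × Equiv.Perm (Fin n)) (u : Fin n → ℤ) : Fin n → ℤ :=
  fun t => x.1 t + u (x.2⁻¹ t)

/-!
Fix `i0 ∈ I`. Over one period `i0 ≤ i ≤ i0 + n`, every coordinate `t` of a face rises from
`v i0 t` to `v i0 t + 1` exactly once, at an index `stepIndex I v i0 t ∈ I`, and the sum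
condition says that precisely `c - i0` coordinates have risen by time `c ∈ I`. So the step
indices of two faces have fibres of equal size and differ by a permutation `σ`; acting by `σ`
and a translation matches the two faces on one period, and `v (i + n) = v i + 1` propagates
this to all of `I`.
-/

open Finset

theorem card_filter_le_eq_of_forall_mem {α : Type*} [Fintype α] {S : Set ℤ} {f g : α → ℤ}
    (hf : ∀ a, f a ∈ S) (hg : ∀ a, g a ∈ S)
    (h : ∀ c ∈ S, #{a | f a ≤ c} = #{a | g a ≤ c}) (c : ℤ) :
    #{a | f a ≤ c} = #{a | g a ≤ c} := by
  -- `{f ≤ c} = {f ≤ m}` for the largest value `m ≤ c` taken by `f` or `g`, and `m ∈ S`.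
  set T := (univ.image f ∪ univ.image g).filter (· ≤ c)
  by_cases hT : T.Nonempty
  · have hmem : T.max' hT ∈ S := by
      rcases mem_union.1 (mem_filter.1 (T.max'_mem hT)).1 with h | h <;>
        obtain ⟨a, -, ha⟩ := mem_image.1 h
      exacts [ha ▸ hf a, ha ▸ hg a]
    have hle (u : α → ℤ) (hu : ∀ a, u a ∈ univ.image f ∪ univ.image g) (a : α) :
        u a ≤ c ↔ u a ≤ T.max' hT :=
      ⟨fun h => T.le_max' _ (mem_filter.2 ⟨hu a, h⟩),
        fun h => h.trans (mem_filter.1 (T.max'_mem hT)).2⟩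
    simp only [hle f (by simp), hle g (by simp)]
    exact h _ hmem
  · rw [not_nonempty_iff_eq_empty, filter_eq_empty_iff] at hT
    rw [filter_false_of_mem, filter_false_of_mem] <;> intro a _ <;> apply hT <;> simp

theorem card_filter_eq_eq_of_card_filter_le_eq {α : Type*} [Fintype α] {f g : α → ℤ}
    (h : ∀ c, #{a | f a ≤ c} = #{a | g a ≤ c}) (b : ℤ) :
    #{a | f a = b} = #{a | g a = b} := by
  classical
  have split (u : α → ℤ) : #{a | u a ≤ b} = #{a | u a = b} + #{a | u a ≤ b - 1} := by
    rw [← card_union_of_disjoint (disjoint_filter.2 fun a _ h₁ h₂ => by omega), ← filter_or]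
    congr 1; ext a; simp only [mem_filter, mem_univ, true_and]; omega
  have := h b; have := h (b - 1); have := split f; have := split g
  omega

theorem exists_perm_comp_eq_of_card_filter_le_eq {α : Type*} [Fintype α]
    {f g : α → ℤ} (h : ∀ c, #{a | f a ≤ c} = #{a | g a ≤ c}) :
    ∃ σ : Equiv.Perm α, ∀ a, g (σ a) = f a := by
  have hcard (b : ℤ) : Fintype.card {a // f a = b} = Fintype.card {a // g a = b} := by
    simpa only [Fintype.card_subtype] using card_filter_eq_eq_of_card_filter_le_eq h b
  exact ⟨Equiv.ofFiberEquiv fun b => Fintype.equivOfCardEq (hcard b),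
    Equiv.ofFiberEquiv_map _⟩

theorem IsPeriodic.add_mul_mem_iff {n : ℕ} {I : Set ℤ} (hI : IsPeriodic n I) (i k : ℤ) :
    i + k * n ∈ I ↔ i ∈ I :=
  have hper : Function.Periodic (· ∈ I) (n : ℤ) := fun i => propext (hI i).symm
  Iff.of_eq (hper.int_mul k i)

noncomputable def stepIndex {n : ℕ} (I : Set ℤ) (v : ℤ → Fin n → ℤ) (i0 : ℤ) (t : Fin n) :
    ℤ :=
  sInf {j | j ∈ I ∧ i0 < j ∧ v j t = v i0 t + 1}

namespace IsFace

variable {n : ℕ} {I : Set ℤ} {v w : ℤ → Fin n → ℤ} {i0 : ℤ}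

theorem map_affAct (x : (Fin n → ℤ) × Equiv.Perm (Fin n)) (hv : IsFace n I v) :
    IsFace n I (fun i => affAct n x (v i)) := by
  obtain ⟨hshift, hmono, hsum⟩ := hv
  refine ⟨fun i hi t => ?_, fun i hi j hj hij t => ?_, fun i hi j hj => ?_⟩
  · simp only [affAct, hshift i hi]; ring
  · simpa only [affAct, add_le_add_iff_left] using hmono i hi j hj hij _
  · simp only [affAct, sum_add_distrib, Equiv.sum_comp x.2⁻¹ (v _)]
    linarith [hsum i hi j hj]

theorem apply_add_mul (hI : IsPeriodic n I) (hv : IsFace n I v) {i : ℤ} (hi : i ∈ I)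
    (k : ℤ) (t : Fin n) : v (i + k * n) t = v i t + k := by
  induction k using Int.induction_on with
  | zero => simp
  | succ k ih =>
    rw [add_one_mul, ← add_assoc, hv.1 _ ((hI.add_mul_mem_iff i k).2 hi), ih, add_assoc]
  | pred k ih =>
    have h := hv.1 _ ((hI.add_mul_mem_iff i (-k - 1)).2 hi) t
    rw [show i + (-k - 1) * n + n = i + -k * n by ring, ih] at h
    linarith

theorem apply_eq_of_eqOn_period (hI : IsPeriodic n I) (hv : IsFace n I v) (hw : IsFace n I w)
    (i0 : ℤ) (t : Fin n) (h : ∀ j ∈ I ∩ Set.Ico i0 (i0 + n), v j t = w j t)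
    {i : ℤ} (hi : i ∈ I) : v i t = w i t := by
  have hn : (0 : ℤ) < n := by exact_mod_cast t.pos
  set r := i0 + (i - i0) % n
  have hir : i = r + (i - i0) / n * n := by linarith [Int.ediv_mul_add_emod (i - i0) n]
  have hr : r ∈ I := (hI.add_mul_mem_iff r _).1 (hir ▸ hi)
  have hrv : v r t = w r t :=
    h r ⟨hr, by simp [r, Int.emod_nonneg _ hn.ne'], by simp [r, Int.emod_lt_of_pos _ hn]⟩
  rw [hir, hv.apply_add_mul hI hr, hw.apply_add_mul hI hr, hrv]

theorem stepIndex_mem (hI : IsPeriodic n I) (hv : IsFace n I v) (hi0 : i0 ∈ I) (t : Fin n) :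
    stepIndex I v i0 t ∈ {j | j ∈ I ∧ i0 < j ∧ v j t = v i0 t + 1} :=
  Int.csInf_mem ⟨i0 + n, (hI i0).1 hi0, by simp [t.pos], hv.1 i0 hi0 t⟩
    ⟨i0, fun _ hj => hj.2.1.le⟩

theorem stepIndex_le {t : Fin n} {j : ℤ} (hj : j ∈ I) (hij : i0 < j)
    (hvj : v j t = v i0 t + 1) : stepIndex I v i0 t ≤ j :=
  csInf_le ⟨i0, fun _ hk => hk.2.1.le⟩ ⟨hj, hij, hvj⟩

theorem stepIndex_mem_inter_Icc (hI : IsPeriodic n I) (hv : IsFace n I v) (hi0 : i0 ∈ I)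
    (t : Fin n) : stepIndex I v i0 t ∈ I ∩ Set.Icc i0 (i0 + n) :=
  have ⟨hsI, hs0, _⟩ := hv.stepIndex_mem hI hi0 t
  ⟨hsI, hs0.le, stepIndex_le ((hI i0).1 hi0) (by simp [t.pos]) (hv.1 i0 hi0 t)⟩

theorem apply_eq_add_ite (hI : IsPeriodic n I) (hv : IsFace n I v) (hi0 : i0 ∈ I)
    {i : ℤ} (hi : i ∈ I ∩ Set.Icc i0 (i0 + n)) (t : Fin n) :
    v i t = v i0 t + if stepIndex I v i0 t ≤ i then 1 else 0 := by
  obtain ⟨hi, h0i, hin⟩ := hi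
  obtain ⟨hsI, hs0, hsv⟩ := hv.stepIndex_mem hI hi0 t
  have hlow := hv.2.1 i0 hi0 i hi h0i t
  have hup : v i t ≤ v i0 t + 1 := hv.1 i0 hi0 t ▸ hv.2.1 i hi _ ((hI i0).1 hi0) hin t
  split_ifs with hs
  · linarith [hv.2.1 _ hsI i hi hs t]
  · by_contra hne
    have h0i' : i0 < i := lt_of_le_of_ne h0i (by rintro rfl; omega)
    exact hs (stepIndex_le hi h0i' (by omega))

theorem card_stepIndex_le (hI : IsPeriodic n I) (hv : IsFace n I v) (hi0 : i0 ∈ I)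
    {c : ℤ} (hc : c ∈ I ∩ Set.Icc i0 (i0 + n)) :
    (#{t | stepIndex I v i0 t ≤ c} : ℤ) = c - i0 := by
  rw [← hv.2.2 i0 hi0 c hc.1, ← sum_sub_distrib, natCast_card_filter]
  refine sum_congr rfl fun t _ => ?_
  rw [hv.apply_eq_add_ite hI hi0 hc t]
  ring

end IsFace

theorem affine_weyl_transitive_on_faces_general (n : ℕ)
    (I : Set ℤ) (hIper : IsPeriodic n I) (hIne : I.Nonempty) :
    (∀ (x : (Fin n → ℤ) × Equiv.Perm (Fin n)) (v : ℤ → Fin n → ℤ),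
      IsFace n I v → IsFace n I (fun i => affAct n x (v i))) ∧
    (∀ v w : ℤ → Fin n → ℤ, IsFace n I v → IsFace n I w →
      ∃ x : (Fin n → ℤ) × Equiv.Perm (Fin n), ∀ i ∈ I, affAct n x (v i) = w i) := by
  refine ⟨fun x v hv => hv.map_affAct x, fun v w hv hw => ?_⟩
  obtain ⟨i0, hi0⟩ := hIne
  obtain ⟨σ, hσ⟩ := exists_perm_comp_eq_of_card_filter_le_eq <|
    card_filter_le_eq_of_forall_mem (hv.stepIndex_mem_inter_Icc hIper hi0)
      (hw.stepIndex_mem_inter_Icc hIper hi0) fun c hc => by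
        exact_mod_cast (hv.card_stepIndex_le hIper hi0 hc).trans
          (hw.card_stepIndex_le hIper hi0 hc).symm
  refine ⟨(fun t => w i0 t - v i0 (σ⁻¹ t), σ), fun i hi => funext fun t => ?_⟩
  refine (hv.map_affAct _).apply_eq_of_eqOn_period hIper hw i0 t (fun j hj => ?_) hi
  have hj' := Set.inter_subset_inter_right I Set.Ico_subset_Icc_self hj
  simp only [affAct]
  rw [hv.apply_eq_add_ite hIper hi0 hj', hw.apply_eq_add_ite hIper hi0 hj',
    ← hσ (σ⁻¹ t), Equiv.Perm.coe_inv, Equiv.apply_symm_apply]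
  ring

/-- **The extended affine Weyl group acts transitively on faces of type `I`.** For every
nonempty periodic `I ⊆ ℤ`, the componentwise action of `W̃ = ℤ^n ⋊ S_n` carries faces of
type `I` to faces of type `I`, and any two faces of type `I` are in the same orbit. -/
theorem affine_weyl_transitive_on_faces (n : ℕ) (hn : 1 ≤ n)
    (I : Set ℤ) (hIper : IsPeriodic n I) (hIne : I.Nonempty) :
    (∀ (x : (Fin n → ℤ) × Equiv.Perm (Fin n)) (v : ℤ → Fin n → ℤ),
      IsFace n I v → IsFace n I (fun i => affAct n x (v i))) ∧
    (∀ v w : ℤ → Fin n → ℤ, IsFace n I v → IsFace n I w →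
      ∃ x : (Fin n → ℤ) × Equiv.Perm (Fin n), ∀ i ∈ I, affAct n x (v i) = w i) :=
  affine_weyl_transitive_on_faces_general n I hIper hIne
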